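/- Consider variables x_{ij} (1 ≤ i ≤ j ≤ c) subject to the relations x_{mm} = Σ{x_{ij} : i ≠ m and j ≠ m} for m = 1,...,c−1, together with Σ_{i≤j} x_{ij} = 0. This system of c linear equations in the x_{ij} has rank exactly c. -/

import Mathlib

/-!
Restricted to the columns `(m, c - 1)`, the coefficient matrix becomes the square matrix whose
row `c - 1` is all ones and whose other rows are `-1` off the diagonal and `0` on it. In a
vanishing combination `∑ gᵢ • rowᵢ`, column `c - 1` gives `g_{c-1} = ∑_{i ≠ c-1} gᵢ`, and
subtracting this from column `m` leaves `g_m = 0`.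
-/

open Finset

theorem sum_mul_ite_pivot {R ι : Type*} [CommRing R] [Fintype ι] [DecidableEq ι]
    (o m : ι) (g : ι → R) :
    ∑ i, g i * (if i = o then 1 else if i = m then 0 else -1) =
      ∑ i, g i * (if i = o then 1 else -1) + if m = o then 0 else g m := by
  have hsplit : ∀ i, g i * (if i = o then (1 : R) else if i = m then 0 else -1) =
      g i * (if i = o then 1 else -1) + if i = m then (if m = o then 0 else g m) else 0 := by
    intro i
    by_cases hio : i = o <;> by_cases him : i = m <;> simp_all
  simp only [hsplit, sum_add_distrib, sum_ite_eq', mem_univ, if_true]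

theorem linearIndependent_pivot_rows {R ι : Type*} [CommRing R] [Fintype ι] [DecidableEq ι]
    (o : ι) :
    LinearIndependent R (fun i m : ι => if i = o then (1 : R) else if i = m then 0 else -1) := by
  rw [Fintype.linearIndependent_iff]
  intro g hg
  have hcol : ∀ m,
      ∑ i, g i * (if i = o then (1 : R) else -1) + (if m = o then 0 else g m) = 0 := by
    intro m
    rw [← sum_mul_ite_pivot]
    simpa using congrFun hg m
  have hs : ∑ i, g i * (if i = o then (1 : R) else -1) = 0 := by simpa using hcol o
  have hoff : ∀ m, m ≠ o → g m = 0 := fun m hm => by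
    simpa only [hs, hm, if_false, zero_add] using hcol m
  have ho : g o = 0 := by
    rwa [sum_eq_single o (fun i _ hi => by simp [hoff i hi]) (by simp), if_pos rfl, mul_one] at hs
  intro i
  by_cases hi : i = o
  · exact hi ▸ ho
  · exact hoff i hi

theorem vertex_redundancy_relations_rank_general (c : ℕ)
    (M : Fin c → ({p : Fin c × Fin c // p.1 ≤ p.2} → ℝ))
    (hM : ∀ m p, M m p =
      if (m : ℕ) = c - 1 then 1
      else if p.1.1 = m ∧ p.1.2 = m then 1
      else if p.1.1 ≠ m ∧ p.1.2 ≠ m then -1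
      else 0) :
    LinearIndependent ℝ M := by
  cases c with
  | zero => exact linearIndependent_empty_type
  | succ n =>
    let q : Fin (n + 1) → {p : Fin (n + 1) × Fin (n + 1) // p.1 ≤ p.2} :=
      fun m => ⟨(m, Fin.last n), Fin.le_last m⟩
    have hMq : LinearMap.funLeft ℝ ℝ q ∘ M =
        fun i m => if i = Fin.last n then (1 : ℝ) else if i = m then 0 else -1 := by
      ext i m
      simp only [Function.comp_apply, LinearMap.funLeft_apply, hM, q, Fin.ext_iff, Fin.val_last,
        add_tsub_cancel_right]
      grind
    exact .of_comp (LinearMap.funLeft ℝ ℝ q) (hMq ▸ linearIndependent_pivot_rows (Fin.last n))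

/-- The system of `c` linear equations in the variables `x_{ij}` (`i ≤ j`),
consisting of `x_{mm} = ∑ {x_{ij} : i ≠ m, j ≠ m}` for `m = 1,…,c-1` together
with `∑_{i≤j} x_{ij} = 0`, has rank exactly `c`: the `c` coefficient rows are
linearly independent. -/
theorem vertex_redundancy_relations_rank (c : ℕ) (hc : 0 < c)
    (M : Fin c → ({p : Fin c × Fin c // p.1 ≤ p.2} → ℝ))
    (hM : ∀ m p, M m p =
      if (m : ℕ) = c - 1 then 1
      else if p.1.1 = m ∧ p.1.2 = m then 1
      else if p.1.1 ≠ m ∧ p.1.2 ≠ m then -1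
      else 0) :
    LinearIndependent ℝ M :=
  vertex_redundancy_relations_rank_general c M hM
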